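/- Let Σ be an alphabet, 𝕄 = (M,+,val,𝟘) an idempotent timed valuation monoid, 𝓛 ⊆ 𝕋Σ⁺ a recognizable timed language and r : 𝕋Σ⁺ → M a recognizable quantitative timed language over 𝕄. Then the quantitative timed language r ∩ 𝓛 is recognizable over 𝕄. -/

import Mathlib

open scoped NNReal Classical

/-! # Core definitions: timed automata and weighted timed automata -/

/-- Comparison operators ⋈ ∈ {<, ≤, =, ≥, >}. -/
inductive Cmp : Type
  | lt | le | eq | ge | gt
  deriving DecidableEq

/-- Evaluation of a comparison `r ⋈ c` for `r ∈ ℝ≥0` and `c ∈ ℕ`. -/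
def Cmp.eval : Cmp → ℝ≥0 → ℕ → Prop
  | .lt, r, c => r < (c : ℝ≥0)
  | .le, r, c => r ≤ (c : ℝ≥0)
  | .eq, r, c => r = (c : ℝ≥0)
  | .ge, r, c => (c : ℝ≥0) ≤ r
  | .gt, r, c => (c : ℝ≥0) < r

/-- Clock constraints over a set `C` of clocks: `True` or conjunctions of `x ⋈ c`. -/
inductive ClockConstraint (C : Type) : Type
  | tt : ClockConstraint C
  | atom : C → Cmp → ℕ → ClockConstraint C
  | conj : ClockConstraint C → ClockConstraint C → ClockConstraint C

/-- A clock valuation assigns a non-negative real to each clock. -/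
def ClockVal (C : Type) : Type := C → ℝ≥0

/-- Satisfaction of clock constraints. -/
def ClockConstraint.Sat {C : Type} (ν : ClockVal C) : ClockConstraint C → Prop
  | .tt => True
  | .atom x op c => op.eval (ν x) c
  | .conj φ ψ => φ.Sat ν ∧ ψ.Sat ν

/-- `ν + t`: add `t` to every clock. -/
def ClockVal.add {C : Type} (ν : ClockVal C) (t : ℝ≥0) : ClockVal C := fun x => ν x + t

/-- `ν[Λ := 0]`: reset the clocks in `Λ` to `0`. -/
noncomputable def ClockVal.reset {C : Type} (ν : ClockVal C) (Λ : Set C) : ClockVal C :=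
  fun x => if x ∈ Λ then 0 else ν x

/-- The clock valuation assigning `0` to every clock. -/
def ClockVal.zero {C : Type} : ClockVal C := fun _ => 0

/-- An edge of a timed automaton: an element of `L × Σ × Φ(C) × 2^C × L`. -/
structure Edge (L A C : Type) : Type where
  src : L
  label : A
  guard : ClockConstraint C
  reset : Set C
  dst : L

/-- A timed automaton over the alphabet `A`. -/
structure TimedAutomaton (A : Type) : Type 1 where
  L : Type
  C : Type
  finL : Finite L
  finC : Finite C
  I : Set L
  F : Set L
  E : Set (Edge L A C)
  finE : E.Finite

/-- A (non-empty finite) timed word over `A`. -/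
abbrev TimedWord (A : Type) : Type := { w : List (A × ℝ≥0) // w ≠ [] }

/-- `T.IsRunFrom ℓ ν w es` holds iff `es` is the sequence of edges of a run of `T`
reading the timed word `w`, starting in location `ℓ` with clock valuation `ν`,
and ending in a final location. -/
def TimedAutomaton.IsRunFrom {A : Type} (T : TimedAutomaton A) :
    T.L → ClockVal T.C → List (A × ℝ≥0) → List (Edge T.L A T.C) → Prop
  | ℓ, _, [], [] => ℓ ∈ T.F
  | ℓ, ν, (a, t) :: w, e :: es =>
      e ∈ T.E ∧ e.src = ℓ ∧ e.label = a ∧ e.guard.Sat (ν.add t) ∧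
      T.IsRunFrom e.dst ((ν.add t).reset e.reset) w es
  | _, _, [], _ :: _ => False
  | _, _, _ :: _, [] => False

/-- `Run_T(w)`: the set of runs (identified with their edge sequences) of `T` on `w`. -/
def TimedAutomaton.RunOn {A : Type} (T : TimedAutomaton A) (w : TimedWord A) :
    Set (List (Edge T.L A T.C)) :=
  { es | ∃ ℓ₀ ∈ T.I, T.IsRunFrom ℓ₀ ClockVal.zero w.1 es }

/-- `L(T)`: the timed language accepted by `T`. -/
def TimedAutomaton.Lang {A : Type} (T : TimedAutomaton A) : Set (TimedWord A) :=
  { w | (T.RunOn w).Nonempty }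

/-- A timed automaton is unambiguous if every timed word has at most one run. -/
def TimedAutomaton.Unambiguous {A : Type} (T : TimedAutomaton A) : Prop :=
  ∀ w : TimedWord A, (T.RunOn w).Subsingleton

/-- A timed automaton is deterministic if it has a single initial location and the guards of
any two distinct edges with the same source and label are jointly unsatisfiable. -/
def TimedAutomaton.Deterministic {A : Type} (T : TimedAutomaton A) : Prop :=
  (∃ ℓ, T.I = {ℓ}) ∧
  ∀ e₁ ∈ T.E, ∀ e₂ ∈ T.E, e₁.src = e₂.src → e₁.label = e₂.label → e₁ ≠ e₂ →
    ∀ ν : ClockVal T.C, ¬ (e₁.guard.Sat ν ∧ e₂.guard.Sat ν)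

/-- A timed automaton is sequential if it has a single initial location and any two edges
with the same source and label are equal. -/
def TimedAutomaton.Sequential {A : Type} (T : TimedAutomaton A) : Prop :=
  (∃ ℓ, T.I = {ℓ}) ∧
  ∀ e₁ ∈ T.E, ∀ e₂ ∈ T.E, e₁.src = e₂.src → e₁.label = e₂.label → e₁ = e₂

/-- A timed language is recognizable by a timed automaton satisfying `P`. -/
def TLRecognizableBy {A : Type} (P : TimedAutomaton A → Prop) (𝓛 : Set (TimedWord A)) : Prop :=
  ∃ T : TimedAutomaton A, P T ∧ T.Lang = 𝓛

/-- A weighted timed automaton over the alphabet `A` and (the domain `M` of) a timed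
valuation monoid: a timed automaton together with weights on locations and edges.
The timed valuation monoid itself is given by an `AddCommMonoid M` instance together with a
timed valuation function `val : List ((M × M) × ℝ≥0) → M` (only its values on non-empty
lists, i.e. on `𝕋(M×M)⁺`, ever matter). -/
structure WTA (A M : Type) extends TimedAutomaton A where
  wtL : L → M
  wtE : Edge L A C → M

/-- The timed word `wt♯(ρ) ∈ 𝕋(M×M)⁺` associated with a run: the `i`-th letter is
`((wt(ℓ_{i-1}), wt(e_i)), t_i)`, where `ℓ_{i-1}` is the source location of edge `e_i`. -/
def WTA.runWord {A M : Type} (W : WTA A M) (w : List (A × ℝ≥0))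
    (es : List (Edge W.L A W.C)) : List ((M × M) × ℝ≥0) :=
  List.zipWith (fun (p : A × ℝ≥0) e => ((W.wtL e.src, W.wtE e), p.2)) w es

/-- The behavior `‖W‖ : 𝕋A⁺ → M` of a WTA: `‖W‖(w) = Σ (val(wt♯(ρ)) : ρ ∈ Run_W(w))`,
the empty sum being `0` (the monoid unit `𝟘`). -/
noncomputable def WTA.behavior {A M : Type} [AddCommMonoid M]
    (val : List ((M × M) × ℝ≥0) → M) (W : WTA A M) (w : TimedWord A) : M :=
  ∑ᶠ es ∈ W.toTimedAutomaton.RunOn w, val (W.runWord w.1 es)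

/-- A quantitative timed language `r : 𝕋A⁺ → M` is recognizable over the timed valuation
monoid `(M, +, val, 𝟘)` by a WTA whose underlying timed automaton satisfies `P`. -/
def QTLRecognizableBy {A M : Type} [AddCommMonoid M] (val : List ((M × M) × ℝ≥0) → M)
    (P : TimedAutomaton A → Prop) (r : TimedWord A → M) : Prop :=
  ∃ W : WTA A M, P W.toTimedAutomaton ∧ ∀ w, W.behavior val w = r w

/-- Recognizability (no restriction on the underlying timed automaton). -/
def QTLRecognizable {A M : Type} [AddCommMonoid M] (val : List ((M × M) × ℝ≥0) → M)
    (r : TimedWord A → M) : Prop :=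
  ∃ W : WTA A M, ∀ w, W.behavior val w = r w

/-- Renaming of timed words along `h : Γ → A`. -/
def mapTimedWord {Γ A : Type} (h : Γ → A) (v : TimedWord Γ) : TimedWord A :=
  ⟨v.1.map (fun p => (h p.1, p.2)), by
    cases v with
    | mk l hl => cases l with
      | nil => exact absurd rfl hl
      | cons p l => simp⟩

/-- `h(r)(w) = Σ (r(v) : v ∈ 𝕋Γ⁺, h(v) = w)` (a finite sum when `Γ` is finite). -/
noncomputable def pushQTL {Γ A M : Type} [AddCommMonoid M] (h : Γ → A)
    (r : TimedWord Γ → M) (w : TimedWord A) : M :=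
  ∑ᶠ v ∈ { v : TimedWord Γ | mapTimedWord h v = w }, r v

/-- `(val ∘ g)(w) = val((g(a₁),t₁)…(g(aₙ),tₙ))`. -/
def valComp {A M : Type} (val : List ((M × M) × ℝ≥0) → M) (g : A → M × M)
    (w : TimedWord A) : M :=
  val (w.1.map (fun p => (g p.1, p.2)))

/-- The intersection `r ∩ 𝓛` of a quantitative timed language with a timed language. -/
noncomputable def interQTL {A M : Type} [Zero M] (r : TimedWord A → M)
    (𝓛 : Set (TimedWord A)) (w : TimedWord A) : M :=
  if w ∈ 𝓛 then r w else 0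

/-- Membership in the Nivat class `N^P(A, 𝕄)`: `𝕃 = h((val ∘ g) ∩ 𝓛)` for some alphabet `Γ`,
maps `h : Γ → A`, `g : Γ → M × M` and a timed language `𝓛` recognizable by a timed
automaton satisfying `P`. -/
def NivatMem {A M : Type} [AddCommMonoid M] (val : List ((M × M) × ℝ≥0) → M)
    (P : ∀ {Γ : Type}, TimedAutomaton Γ → Prop) (𝕃 : TimedWord A → M) : Prop :=
  ∃ (Γ : Type) (_ : Finite Γ) (_ : Nonempty Γ) (h : Γ → A) (g : Γ → M × M)
    (𝓛 : Set (TimedWord Γ)),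
      TLRecognizableBy P 𝓛 ∧ ∀ w, 𝕃 w = pushQTL h (interQTL (valComp val g) 𝓛) w

/-- Membership in the class `H^P(A, 𝕄)`: `𝕃 = h(r)` for some alphabet `Γ`, `h : Γ → A`
and a quantitative timed language `r` recognizable by a WTA whose underlying timed
automaton satisfies `P`. -/
def HMem {A M : Type} [AddCommMonoid M] (val : List ((M × M) × ℝ≥0) → M)
    (P : ∀ {Γ : Type}, TimedAutomaton Γ → Prop) (𝕃 : TimedWord A → M) : Prop :=
  ∃ (Γ : Type) (_ : Finite Γ) (_ : Nonempty Γ) (h : Γ → A) (r : TimedWord Γ → M),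
      QTLRecognizableBy val (fun T => P T) r ∧ ∀ w, 𝕃 w = pushQTL h r w

/-- Idempotency of a timed valuation monoid. -/
def IsIdempotent (M : Type) [Add M] : Prop := ∀ m : M, m + m = m

/-- Location-independence of a timed valuation function: the value of `val` on a non-empty
timed word over `M × M` depends only on the second components and the time stamps. -/
def LocIndep {M : Type} (val : List ((M × M) × ℝ≥0) → M) : Prop :=
  ∀ l l' : List ((M × M) × ℝ≥0), l ≠ [] →
    l.map (fun p => (p.1.2, p.2)) = l'.map (fun p => (p.1.2, p.2)) → val l = val l'

/-!
Take a WTA `W` for `r` and a timed automaton `T` for `𝓛`, and run them synchronously, with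
disjoint clocks and the weights of `W`. The runs of the product on `w` are exactly the pairs of
runs of `W` and `T` on `w`, so its behaviour at `w` is `|Run_T(w)| • r(w)`. By idempotency this
is `r(w)` when `w ∈ 𝓛`, and it is the empty sum `0` otherwise.
-/

def ClockVal.comp {C C' : Type} (ν : ClockVal C') (g : C → C') : ClockVal C := fun x => ν (g x)

namespace ClockConstraint

variable {C C' : Type}

def map (g : C → C') : ClockConstraint C → ClockConstraint C'
  | .tt => .tt
  | .atom x op c => .atom (g x) op c
  | .conj φ ψ => .conj (φ.map g) (ψ.map g)

def filterMap (g : C' → Option C) : ClockConstraint C' → ClockConstraint C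
  | .tt => .tt
  | .atom x op c => match g x with
    | some y => .atom y op c
    | none => .tt
  | .conj φ ψ => .conj (φ.filterMap g) (ψ.filterMap g)

theorem sat_map (g : C → C') (ν : ClockVal C') :
    ∀ φ : ClockConstraint C, (φ.map g).Sat ν ↔ φ.Sat (ν.comp g)
  | .tt => Iff.rfl
  | .atom _ _ _ => Iff.rfl
  | .conj φ ψ => and_congr (sat_map g ν φ) (sat_map g ν ψ)

theorem filterMap_map {g : C → C'} {f : C' → Option C} (hfg : ∀ x, f (g x) = some x) :
    ∀ φ : ClockConstraint C, (φ.map g).filterMap f = φ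
  | .tt => rfl
  | .atom x op c => by simp only [map, filterMap, hfg]
  | .conj φ ψ => by rw [map, filterMap, filterMap_map hfg φ, filterMap_map hfg ψ]

end ClockConstraint

theorem ClockVal.add_comp {C C' : Type} (ν : ClockVal C') (t : ℝ≥0) (g : C → C') :
    (ν.add t).comp g = (ν.comp g).add t :=
  rfl

theorem ClockVal.reset_comp_inl {C₁ C₂ : Type} (ν : ClockVal (C₁ ⊕ C₂)) (R₁ : Set C₁)
    (R₂ : Set C₂) :
    (ν.reset (Sum.inl '' R₁ ∪ Sum.inr '' R₂)).comp Sum.inl = (ν.comp Sum.inl).reset R₁ := by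
  funext x
  by_cases hx : x ∈ R₁ <;> simp [ClockVal.reset, ClockVal.comp, hx]

theorem ClockVal.reset_comp_inr {C₁ C₂ : Type} (ν : ClockVal (C₁ ⊕ C₂)) (R₁ : Set C₁)
    (R₂ : Set C₂) :
    (ν.reset (Sum.inl '' R₁ ∪ Sum.inr '' R₂)).comp Sum.inr = (ν.comp Sum.inr).reset R₂ := by
  funext x
  by_cases hx : x ∈ R₂ <;> simp [ClockVal.reset, ClockVal.comp, hx]

namespace Edge

variable {A L₁ L₂ C₁ C₂ : Type}

@[simps]
def prod (e : Edge L₁ A C₁) (f : Edge L₂ A C₂) : Edge (L₁ × L₂) A (C₁ ⊕ C₂) :=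
  ⟨(e.src, f.src), e.label, .conj (e.guard.map Sum.inl) (f.guard.map Sum.inr),
    Sum.inl '' e.reset ∪ Sum.inr '' f.reset, (e.dst, f.dst)⟩

def fst (g : Edge (L₁ × L₂) A (C₁ ⊕ C₂)) : Edge L₁ A C₁ :=
  ⟨g.src.1, g.label, (match g.guard with | .conj φ _ => φ | φ => φ).filterMap Sum.getLeft?,
    Sum.inl ⁻¹' g.reset, g.dst.1⟩

def snd (g : Edge (L₁ × L₂) A (C₁ ⊕ C₂)) : Edge L₂ A C₂ :=
  ⟨g.src.2, g.label, (match g.guard with | .conj _ ψ => ψ | ψ => ψ).filterMap Sum.getRight?,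
    Sum.inr ⁻¹' g.reset, g.dst.2⟩

@[simp]
theorem fst_prod (e : Edge L₁ A C₁) (f : Edge L₂ A C₂) : (e.prod f).fst = e := by
  simp [fst, prod, ClockConstraint.filterMap_map (f := Sum.getLeft?) (g := Sum.inl) fun _ => rfl,
    Sum.inl_injective.preimage_image]

theorem snd_prod {e : Edge L₁ A C₁} {f : Edge L₂ A C₂} (h : e.label = f.label) :
    (e.prod f).snd = f := by
  simp [snd, prod, ClockConstraint.filterMap_map (f := Sum.getRight?) (g := Sum.inr) fun _ => rfl,
    Sum.inr_injective.preimage_image, h]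

theorem map_fst_zipWith_prod :
    ∀ {es₁ : List (Edge L₁ A C₁)} {es₂ : List (Edge L₂ A C₂)}, es₁.length = es₂.length →
      (List.zipWith Edge.prod es₁ es₂).map Edge.fst = es₁
  | [], [], _ => rfl
  | _ :: _, _ :: _, h => by
      rw [List.zipWith_cons_cons, List.map_cons, fst_prod,
        map_fst_zipWith_prod (Nat.succ.inj h)]

theorem map_snd_zipWith_prod :
    ∀ {es₁ : List (Edge L₁ A C₁)} {es₂ : List (Edge L₂ A C₂)},
      es₁.map Edge.label = es₂.map Edge.label →
      (List.zipWith Edge.prod es₁ es₂).map Edge.snd = es₂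
  | [], [], _ => rfl
  | _ :: _, _ :: _, h => by
      rw [List.map_cons, List.map_cons, List.cons.injEq] at h
      rw [List.zipWith_cons_cons, List.map_cons, snd_prod h.1,
        map_snd_zipWith_prod h.2]

end Edge

namespace TimedAutomaton

variable {A : Type}

theorem isRunFrom_nil_iff (T : TimedAutomaton A) {ℓ : T.L} {ν : ClockVal T.C}
    {es : List (Edge T.L A T.C)} : T.IsRunFrom ℓ ν [] es ↔ es = [] ∧ ℓ ∈ T.F := by
  cases es <;> simp [IsRunFrom]

theorem isRunFrom_cons_iff (T : TimedAutomaton A) {ℓ : T.L} {ν : ClockVal T.C} {a : A}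
    {t : ℝ≥0} {w : List (A × ℝ≥0)} {es : List (Edge T.L A T.C)} :
    T.IsRunFrom ℓ ν ((a, t) :: w) es ↔ ∃ e es', es = e :: es' ∧ e ∈ T.E ∧ e.src = ℓ ∧
      e.label = a ∧ e.guard.Sat (ν.add t) ∧ T.IsRunFrom e.dst ((ν.add t).reset e.reset) w es' := by
  cases es <;> simp [IsRunFrom]

theorem IsRunFrom.map_label {T : TimedAutomaton A} :
    ∀ {w : List (A × ℝ≥0)} {ℓ : T.L} {ν : ClockVal T.C} {es : List (Edge T.L A T.C)},
      T.IsRunFrom ℓ ν w es → es.map Edge.label = w.map Prod.fst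
  | [], _, _, _, h => by rw [(T.isRunFrom_nil_iff.1 h).1]; rfl
  | (a, t) :: w, _, _, _, h => by
      obtain ⟨e, es, rfl, -, -, rfl, -, h⟩ := T.isRunFrom_cons_iff.1 h
      rw [List.map_cons, List.map_cons, h.map_label]

theorem IsRunFrom.length_eq {T : TimedAutomaton A} {w : List (A × ℝ≥0)} {ℓ : T.L}
    {ν : ClockVal T.C} {es : List (Edge T.L A T.C)} (h : T.IsRunFrom ℓ ν w es) :
    es.length = w.length := by
  simpa using congrArg List.length h.map_label

theorem IsRunFrom.mem_E {T : TimedAutomaton A} :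
    ∀ {w : List (A × ℝ≥0)} {ℓ : T.L} {ν : ClockVal T.C} {es : List (Edge T.L A T.C)},
      T.IsRunFrom ℓ ν w es → ∀ e ∈ es, e ∈ T.E
  | [], _, _, _, h => by simp [(T.isRunFrom_nil_iff.1 h).1]
  | (a, t) :: w, _, _, _, h => by
      obtain ⟨e, es, rfl, he, -, -, -, h⟩ := T.isRunFrom_cons_iff.1 h
      exact List.forall_mem_cons.2 ⟨he, h.mem_E⟩

theorem finite_runOn (T : TimedAutomaton A) (w : TimedWord A) : (T.RunOn w).Finite := by
  have : Finite T.E := T.finE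
  refine ((List.finite_length_eq T.E w.1.length).image (List.map Subtype.val)).subset ?_
  rintro es ⟨ℓ, -, hrun⟩
  lift es to List T.E using hrun.mem_E
  exact ⟨es, by simpa using hrun.length_eq, rfl⟩

abbrev prod (T₁ T₂ : TimedAutomaton A) : TimedAutomaton A where
  L := T₁.L × T₂.L
  C := T₁.C ⊕ T₂.C
  finL := have := T₁.finL; have := T₂.finL; inferInstance
  finC := have := T₁.finC; have := T₂.finC; inferInstance
  I := T₁.I ×ˢ T₂.I
  F := T₁.F ×ˢ T₂.F
  E := {g | ∃ e ∈ T₁.E, ∃ f ∈ T₂.E, e.label = f.label ∧ e.prod f = g}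
  finE := (T₁.finE.image2 Edge.prod T₂.finE).subset <| by
    rintro _ ⟨e, he, f, hf, -, rfl⟩
    exact Set.mem_image2_of_mem he hf

theorem isRunFrom_prod_iff (T₁ T₂ : TimedAutomaton A) :
    ∀ (w : List (A × ℝ≥0)) (ℓ : T₁.L × T₂.L) (ν : ClockVal (T₁.C ⊕ T₂.C))
      (es : List (Edge (T₁.L × T₂.L) A (T₁.C ⊕ T₂.C))),
      (T₁.prod T₂).IsRunFrom ℓ ν w es ↔ ∃ es₁ es₂, T₁.IsRunFrom ℓ.1 (ν.comp Sum.inl) w es₁ ∧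
        T₂.IsRunFrom ℓ.2 (ν.comp Sum.inr) w es₂ ∧ List.zipWith Edge.prod es₁ es₂ = es
  | [], ℓ, ν, es => by
      refine (T₁.prod T₂).isRunFrom_nil_iff.trans ?_
      simp only [isRunFrom_nil_iff]
      constructor
      · rintro ⟨rfl, hF⟩
        exact ⟨[], [], ⟨rfl, hF.1⟩, ⟨rfl, hF.2⟩, rfl⟩
      · rintro ⟨_, _, ⟨rfl, hF₁⟩, ⟨rfl, hF₂⟩, rfl⟩
        exact ⟨rfl, hF₁, hF₂⟩
  | (a, t) :: w, (ℓ₁, ℓ₂), ν, es => by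
      refine (T₁.prod T₂).isRunFrom_cons_iff.trans ?_
      simp only [isRunFrom_cons_iff]
      constructor
      · rintro ⟨_, es, rfl, ⟨e, he, f, hf, hlabel, rfl⟩, hsrc, rfl, hguard, hrun⟩
        obtain ⟨es₁, es₂, hrun₁, hrun₂, rfl⟩ := (isRunFrom_prod_iff T₁ T₂ w _ _ es).1 hrun
        simp only [Edge.prod_guard, ClockConstraint.Sat, ClockConstraint.sat_map,
          ClockVal.add_comp] at hguard
        obtain ⟨hguard₁, hguard₂⟩ := hguard
        simp only [Edge.prod_reset, Edge.prod_dst, ClockVal.reset_comp_inl,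
          ClockVal.reset_comp_inr, ClockVal.add_comp] at hrun₁ hrun₂
        exact ⟨e :: es₁, f :: es₂, ⟨e, es₁, rfl, he, congrArg Prod.fst hsrc, rfl, hguard₁, hrun₁⟩,
          ⟨f, es₂, rfl, hf, congrArg Prod.snd hsrc, hlabel.symm, hguard₂, hrun₂⟩, rfl⟩
      · rintro ⟨_, _, ⟨e, es₁, rfl, he, rfl, rfl, hguard₁, hrun₁⟩,
          ⟨f, es₂, rfl, hf, rfl, hlabel, hguard₂, hrun₂⟩, rfl⟩
        refine ⟨e.prod f, List.zipWith Edge.prod es₁ es₂, rfl, ⟨e, he, f, hf, hlabel.symm, rfl⟩,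
          rfl, rfl, ⟨(ClockConstraint.sat_map _ _ _).2 hguard₁,
            (ClockConstraint.sat_map _ _ _).2 hguard₂⟩, ?_⟩
        refine (isRunFrom_prod_iff T₁ T₂ w _ _ _).2 ⟨es₁, es₂, ?_, ?_, rfl⟩
        · simpa only [Edge.prod_reset, Edge.prod_dst, ClockVal.reset_comp_inl, ClockVal.add_comp]
        · simpa only [Edge.prod_reset, Edge.prod_dst, ClockVal.reset_comp_inr, ClockVal.add_comp]

theorem runOn_prod (T₁ T₂ : TimedAutomaton A) (w : TimedWord A) :
    (T₁.prod T₂).RunOn w =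
      (fun p => List.zipWith Edge.prod p.1 p.2) '' (T₁.RunOn w ×ˢ T₂.RunOn w) := by
  ext es
  simp only [RunOn, Set.mem_ofPred_eq, Set.mem_image, Set.mem_prod, isRunFrom_prod_iff]
  constructor
  · rintro ⟨ℓ, hℓ, es₁, es₂, h₁, h₂, rfl⟩
    exact ⟨(es₁, es₂), ⟨⟨ℓ.1, hℓ.1, h₁⟩, ⟨ℓ.2, hℓ.2, h₂⟩⟩, rfl⟩
  · rintro ⟨⟨es₁, es₂⟩, ⟨⟨ℓ₁, hℓ₁, h₁⟩, ⟨ℓ₂, hℓ₂, h₂⟩⟩, rfl⟩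
    exact ⟨(ℓ₁, ℓ₂), ⟨hℓ₁, hℓ₂⟩, es₁, es₂, h₁, h₂, rfl⟩

theorem injOn_zipWith_prod_runOn (T₁ T₂ : TimedAutomaton A) (w : TimedWord A) :
    Set.InjOn (fun p => List.zipWith Edge.prod p.1 p.2) (T₁.RunOn w ×ˢ T₂.RunOn w) := by
  rintro ⟨es₁, es₂⟩ ⟨⟨_, -, h₁⟩, ⟨_, -, h₂⟩⟩ ⟨fs₁, fs₂⟩ ⟨⟨_, -, g₁⟩, ⟨_, -, g₂⟩⟩ heq
  have hes : es₁.map Edge.label = es₂.map Edge.label := h₁.map_label.trans h₂.map_label.symm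
  have hfs : fs₁.map Edge.label = fs₂.map Edge.label := g₁.map_label.trans g₂.map_label.symm
  dsimp only at h₁ h₂ g₁ g₂ heq
  rw [Prod.mk.injEq]
  constructor
  · rw [← Edge.map_fst_zipWith_prod (h₁.length_eq.trans h₂.length_eq.symm), heq,
      Edge.map_fst_zipWith_prod (g₁.length_eq.trans g₂.length_eq.symm)]
  · rw [← Edge.map_snd_zipWith_prod hes, heq, Edge.map_snd_zipWith_prod hfs]

end TimedAutomaton

theorem IsIdempotent.nsmul_eq {M : Type} [AddMonoid M] (hidem : IsIdempotent M) (m : M)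
    {n : ℕ} (hn : n ≠ 0) : n • m = m := by
  induction n with
  | zero => exact absurd rfl hn
  | succ n ih =>
    rcases eq_or_ne n 0 with rfl | hn'
    · exact one_nsmul m
    · rw [succ_nsmul, ih hn', hidem]

theorem IsIdempotent.finsum_mem_prod_fst {α β M : Type} [AddCommMonoid M]
    (hidem : IsIdempotent M) {s : Set α} {t : Set β} (hs : s.Finite) (ht : t.Finite)
    (ht' : t.Nonempty) (f : α → M) : ∑ᶠ p ∈ s ×ˢ t, f p.1 = ∑ᶠ a ∈ s, f a := by
  rw [← hs.coe_toFinset, ← ht.coe_toFinset, ← Finset.coe_product, finsum_mem_coe_finset,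
    finsum_mem_coe_finset, Finset.sum_product]
  refine Finset.sum_congr rfl fun a _ => ?_
  dsimp only
  rw [Finset.sum_const, hidem.nsmul_eq _ (Finset.card_ne_zero.2 (ht.toFinset_nonempty.2 ht'))]

namespace WTA

variable {A M : Type}

def prod (W : WTA A M) (T : TimedAutomaton A) : WTA A M where
  toTimedAutomaton := W.toTimedAutomaton.prod T
  wtL ℓ := W.wtL ℓ.1
  wtE g := W.wtE g.fst

theorem runWord_prod (W : WTA A M) (T : TimedAutomaton A) (w : List (A × ℝ≥0))
    (es : List (Edge (W.L × T.L) A (W.C ⊕ T.C))) :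
    (W.prod T).runWord w es = W.runWord w (es.map Edge.fst) := by
  simp only [runWord, List.zipWith_map_right]
  rfl

theorem behavior_prod [AddCommMonoid M] (val : List ((M × M) × ℝ≥0) → M) (W : WTA A M)
    (T : TimedAutomaton A) (w : TimedWord A) :
    (W.prod T).behavior val w =
      ∑ᶠ p ∈ W.RunOn w ×ˢ T.RunOn w, val (W.runWord w.1 p.1) := by
  have hrun : (W.prod T).RunOn w = _ := TimedAutomaton.runOn_prod W.toTimedAutomaton T w
  rw [behavior, hrun]
  refine (finsum_mem_image (TimedAutomaton.injOn_zipWith_prod_runOn _ _ w)).trans ?_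
  refine finsum_mem_congr rfl ?_
  rintro ⟨es₁, es₂⟩ ⟨⟨_, -, h₁⟩, ⟨_, -, h₂⟩⟩
  rw [runWord_prod, Edge.map_fst_zipWith_prod (h₁.length_eq.trans h₂.length_eq.symm)]

theorem behavior_prod_of_idempotent [AddCommMonoid M] {val : List ((M × M) × ℝ≥0) → M}
    (hidem : IsIdempotent M) (W : WTA A M) (T : TimedAutomaton A) (w : TimedWord A) :
    (W.prod T).behavior val w = interQTL (W.behavior val) T.Lang w := by
  rw [behavior_prod, interQTL]
  split_ifs with hw
  · exact hidem.finsum_mem_prod_fst (W.finite_runOn w) (T.finite_runOn w) hw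
      fun es => val (W.runWord w.1 es)
  · rw [Set.not_nonempty_iff_eq_empty.1 hw, Set.prod_empty, finsum_mem_empty]

end WTA

theorem interQTL_recognizable_of_idempotent_general {S M : Type}
    [AddCommMonoid M] (val : List ((M × M) × ℝ≥0) → M) (hidem : IsIdempotent M)
    (𝓛 : Set (TimedWord S)) (h𝓛 : TLRecognizableBy (fun _ => True) 𝓛)
    (r : TimedWord S → M) (hr : QTLRecognizable val r) :
    QTLRecognizable val (interQTL r 𝓛) := by
  obtain ⟨T, -, rfl⟩ := h𝓛
  obtain ⟨W, hW⟩ := hr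
  obtain rfl : W.behavior val = r := funext hW
  exact ⟨W.prod T, W.behavior_prod_of_idempotent hidem T⟩

/-- If `𝕄` is an idempotent timed valuation monoid, `𝓛 ⊆ 𝕋Σ⁺` is a
recognizable timed language and `r : 𝕋Σ⁺ → M` is a recognizable quantitative timed
language over `𝕄`, then `r ∩ 𝓛` is recognizable over `𝕄`. -/
theorem interQTL_recognizable_of_idempotent {S M : Type} [Finite S] [Nonempty S]
    [AddCommMonoid M] (val : List ((M × M) × ℝ≥0) → M) (hidem : IsIdempotent M)
    (𝓛 : Set (TimedWord S)) (h𝓛 : TLRecognizableBy (fun _ => True) 𝓛)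
    (r : TimedWord S → M) (hr : QTLRecognizable val r) :
    QTLRecognizable val (interQTL r 𝓛) :=
  interQTL_recognizable_of_idempotent_general val hidem 𝓛 h𝓛 r hr
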